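/- arXiv:1801.04337 — 8 statements merged into one kernel-verified Lean document; each statement's English description precedes it below -/
import Mathlib

section
/- Derived Category Theorem, part (a). Let F = (G,W), (H₁,V₁), (H₂,V₂) and (H,V) be forest algebras, and let α : F → (H₁,V₁) and β : F → (H₂,V₂) be forest algebra homomorphisms that are surjective in both components. Suppose the derived forest category of the pair (α,β) divides (H,V); concretely, suppose there are a family of subsets K(h₁,h₂) ⊆ H, one for each pair (h₁,h₂) ∈ H₁ × H₂ such that h₁ = α(s) and h₂ = β(s) for some s ∈ G, and a family of subsets K'(h₂,p) ⊆ V, one for each pair (h₂,p) ∈ H₂ × W, satisfying: (nonemptiness) every K(h₁,h₂) and every K'(h₂,p) is nonempty; (∼-invariance) if h₂·β(p) = h₂·β(q) and (h₂, p, h₂·β(p)) ∼ (h₂, q, h₂·β(q)), then K'(h₂,p) = K'(h₂,q); (composition) K'(h₂,p)·K'(h₂·β(p), q) ⊆ K'(h₂, p·q) for all h₂ ∈ H₂, p,q ∈ W; (action) K(h₁,h₂)·K'(h₂,p) ⊆ K(h₁·α(p), h₂·β(p)); (sum) K(h₁,h₂) + K(h₁',h₂') ⊆ K(h₁+h₁',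 h₂+h₂'); (insertion) for every s ∈ G, every h₂ ∈ H₂, p ∈ W, if v ∈ K'(h₂,p) and h ∈ K(α(s),β(s)) then ins(v,h) ∈ K'(h₂, ins(p,s)); (injectivity for half-arrows) if K(h₁,h₂) ∩ K(h₁',h₂) ≠ ∅ then h₁ = h₁'; (injectivity for arrows) if h₂·β(p) = h₂·β(q) and K'(h₂,p) ∩ K'(h₂,q) ≠ ∅ then (h₂, p, h₂·β(p)) ∼ (h₂, q, h₂·β(q)). Then (H₁,V₁) tm-divides the wreath product (H,V)∘(H₂,V₂). -/
/-- A forest algebra: a commutative monoid `H` (horizontal), a monoid `V` (vertical),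
a faithful right action of `V` on `H`, and an insertion operation `ins : V → H → V`. -/
structure ForestAlgebra (H : Type*) (V : Type*) [AddCommMonoid H] [Monoid V] where
  act : H → V → H
  ins : V → H → V
  act_mul : ∀ (h : H) (v w : V), act (act h v) w = act h (v * w)
  act_one : ∀ h : H, act h 1 = h
  faithful : ∀ v v' : V, (∀ h : H, act h v = act h v') → v = v'
  act_ins : ∀ (g : H) (v : V) (h : H), act g (ins v h) = act g v + h

/-- A homomorphism of forest algebras: a pair of monoid homomorphisms compatible
with the actions. -/
structure ForestHom {G W H V : Type*} [AddCommMonoid G] [Monoid W]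
    [AddCommMonoid H] [Monoid V]
    (F : ForestAlgebra G W) (A : ForestAlgebra H V) where
  toH : G →+ H
  toV : W →* V
  map_act : ∀ (s : G) (p : W), toH (F.act s p) = A.act (toH s) (toV p)

/-- The equivalence `(h,p,h·β(p)) ∼ (h,q,h·β(q))` on arrow representations of the
derived forest category of the pair `(α,β)`. -/
def DerSim {G W H₁ V₁ H₂ V₂ : Type*} [AddCommMonoid G] [Monoid W]
    [AddCommMonoid H₁] [Monoid V₁] [AddCommMonoid H₂] [Monoid V₂]
    {F : ForestAlgebra G W} {A₁ : ForestAlgebra H₁ V₁} {A₂ : ForestAlgebra H₂ V₂}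
    (α : ForestHom F A₁) (β : ForestHom F A₂) (h : H₂) (p q : W) : Prop :=
  ∀ s : G, β.toH s = h → α.toH (F.act s p) = α.toH (F.act s q)

/-- Derived Category Theorem, part (a): if the derived forest category of the pair
`(α,β)` divides `(H,V)` (witnessed by covering families `K` for half-arrows and `K'`
for arrows), then `(H₁,V₁)` tm-divides the wreath product `(H,V)∘(H₂,V₂)`.
The wreath product has horizontal part `H × H₂` with componentwise addition, and
vertical part `(H₂ → V) × V₂` acting by `(g,h₂)·(f,v) = (g·f(h₂), h₂·v)`. -/
theorem derived_category_theorem_a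
    {G W H₁ V₁ H₂ V₂ H V : Type*} [AddCommMonoid G] [Monoid W]
    [AddCommMonoid H₁] [Monoid V₁] [AddCommMonoid H₂] [Monoid V₂]
    [AddCommMonoid H] [Monoid V]
    (F : ForestAlgebra G W) (A₁ : ForestAlgebra H₁ V₁) (A₂ : ForestAlgebra H₂ V₂)
    (A : ForestAlgebra H V)
    (α : ForestHom F A₁) (β : ForestHom F A₂)
    (hαH : Function.Surjective α.toH) (hαV : Function.Surjective α.toV)
    (hβH : Function.Surjective β.toH) (hβV : Function.Surjective β.toV)
    (K : H₁ → H₂ → Set H) (K' : H₂ → W → Set V)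
    -- nonemptiness
    (hKne : ∀ s : G, (K (α.toH s) (β.toH s)).Nonempty)
    (hK'ne : ∀ (h₂ : H₂) (p : W), (K' h₂ p).Nonempty)
    -- ∼-invariance
    (hKsim : ∀ (h₂ : H₂) (p q : W),
      A₂.act h₂ (β.toV p) = A₂.act h₂ (β.toV q) → DerSim α β h₂ p q →
      K' h₂ p = K' h₂ q)
    -- composition
    (hKcomp : ∀ (h₂ : H₂) (p q : W), ∀ v ∈ K' h₂ p, ∀ w ∈ K' (A₂.act h₂ (β.toV p)) q,
      v * w ∈ K' h₂ (p * q))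
    -- action
    (hKact : ∀ (h₁ : H₁) (h₂ : H₂) (p : W), ∀ h ∈ K h₁ h₂, ∀ v ∈ K' h₂ p,
      A.act h v ∈ K (A₁.act h₁ (α.toV p)) (A₂.act h₂ (β.toV p)))
    -- sum
    (hKsum : ∀ (h₁ h₁' : H₁) (h₂ h₂' : H₂), ∀ h ∈ K h₁ h₂, ∀ h' ∈ K h₁' h₂',
      h + h' ∈ K (h₁ + h₁') (h₂ + h₂'))
    -- insertion
    (hKins : ∀ (s : G) (h₂ : H₂) (p : W), ∀ v ∈ K' h₂ p, ∀ h ∈ K (α.toH s) (β.toH s),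
      A.ins v h ∈ K' h₂ (F.ins p s))
    -- injectivity for half-arrows
    (hKinjH : ∀ (h₁ h₁' : H₁) (h₂ : H₂), (K h₁ h₂ ∩ K h₁' h₂).Nonempty → h₁ = h₁')
    -- injectivity for arrows
    (hKinjV : ∀ (h₂ : H₂) (p q : W),
      A₂.act h₂ (β.toV p) = A₂.act h₂ (β.toV q) →
      (K' h₂ p ∩ K' h₂ q).Nonempty → DerSim α β h₂ p q) :
    -- conclusion: (H₁,V₁) tm-divides the wreath product (H,V)∘(H₂,V₂)
    ∃ (K₀ : AddSubmonoid (H × H₂)) (Ψ : K₀ →+ H₁),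
      Function.Surjective Ψ ∧
      ∀ v : V₁, ∃ vh : (H₂ → V) × V₂, ∀ k : K₀,
        ∃ hk : (A.act (k : H × H₂).1 (vh.1 (k : H × H₂).2),
            A₂.act (k : H × H₂).2 vh.2) ∈ K₀,
          Ψ ⟨(A.act (k : H × H₂).1 (vh.1 (k : H × H₂).2),
              A₂.act (k : H × H₂).2 vh.2), hk⟩ = A₁.act (Ψ k) v := by
  classical
  have uniq : ∀ (a b : H₁) (h₂ : H₂) (h : H), h ∈ K a h₂ → h ∈ K b h₂ → a = b := by
    intro a b h₂ h ha hb; exact hKinjH a b h₂ ⟨h, ha, hb⟩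
  obtain ⟨h₀, hh₀⟩ := hKne 0
  rw [map_zero, map_zero] at hh₀
  set φ : H × H₂ → H₁ := fun x => if hc : ∃ h₁, x.1 ∈ K h₁ x.2 then hc.choose else 0
    with hφdef
  have φ_spec : ∀ (x : H × H₂) (a : H₁), x.1 ∈ K a x.2 → φ x = a := by
    intro x a hx
    have hc : ∃ h₁, x.1 ∈ K h₁ x.2 := ⟨a, hx⟩
    rw [hφdef]
    simp only [dif_pos hc]
    exact uniq _ _ _ _ hc.choose_spec hx
  have φ_zero : φ (0 : H × H₂) = 0 := by
    by_cases hc : ∃ h₁, (0 : H × H₂).1 ∈ K h₁ (0 : H × H₂).2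
    · obtain ⟨a, ha⟩ := hc
      have h1 : (0 : H) + h₀ ∈ K (a + 0) ((0 : H₂) + 0) := hKsum a 0 0 0 _ ha _ hh₀
      simp only [zero_add, add_zero] at h1
      rw [φ_spec 0 a ha]
      exact uniq a 0 0 h₀ h1 hh₀
    · rw [hφdef]; simp only [dif_neg hc]
  refine ⟨{ carrier := {x | (∃ h₁, x.1 ∈ K h₁ x.2) ∨ x = 0}
            add_mem' := ?_
            zero_mem' := Or.inr rfl },
          { toFun := fun k => φ (k : H × H₂)
            map_zero' := φ_zero
            map_add' := ?_ }, ?_, ?_⟩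
  · rintro x y (⟨a, ha⟩ | hx0) (⟨b, hb⟩ | hy0)
    · exact Or.inl ⟨a + b, hKsum a b x.2 y.2 x.1 ha y.1 hb⟩
    · rw [hy0, add_zero]; exact Or.inl ⟨a, ha⟩
    · rw [hx0, zero_add]; exact Or.inl ⟨b, hb⟩
    · rw [hx0, hy0, add_zero]; exact Or.inr rfl
  · rintro ⟨x, (⟨a, ha⟩ | hx0)⟩ ⟨y, (⟨b, hb⟩ | hy0)⟩
    · have hsum : (x + y).1 ∈ K (a + b) (x + y).2 := hKsum a b x.2 y.2 x.1 ha y.1 hb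
      show φ (x + y) = φ x + φ y
      rw [φ_spec _ _ hsum, φ_spec _ _ ha, φ_spec _ _ hb]
    · subst hy0
      show φ (x + 0) = φ x + φ 0
      rw [add_zero, φ_zero, add_zero]
    · subst hx0
      show φ (0 + y) = φ 0 + φ y
      rw [zero_add, φ_zero, zero_add]
    · subst hx0; subst hy0
      show φ (0 + 0) = φ 0 + φ 0
      rw [add_zero, φ_zero, add_zero]
  · intro h₁
    obtain ⟨s, hs⟩ := hαH h₁
    obtain ⟨h, hh⟩ := hKne s
    exact ⟨⟨(h, β.toH s), Or.inl ⟨α.toH s, hh⟩⟩, by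
      simpa [φ_spec (h, β.toH s) (α.toH s) hh] using hs⟩
  · intro v
    obtain ⟨p, hp⟩ := hαV v
    have wmem : ∀ h₂ : H₂, (hK'ne h₂ p).choose ∈ K' h₂ p := fun h₂ => (hK'ne h₂ p).choose_spec
    set w : H₂ → V := fun h₂ => (hK'ne h₂ p).choose with hwdef
    refine ⟨(fun h₂ => if h₂ = 0 then A.ins 1 h₀ * w 0 else w h₂, β.toV p), ?_⟩
    rintro ⟨⟨h, h₂⟩, hk⟩
    have key : A.act h (if h₂ = 0 then A.ins 1 h₀ * w 0 else w h₂)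
        ∈ K (A₁.act (φ (h, h₂)) v) (A₂.act h₂ (β.toV p)) := by
      rcases hk with ⟨h₁, hmem⟩ | h0
      · have hφ : φ (h, h₂) = h₁ := φ_spec (h, h₂) h₁ hmem
        rw [hφ]
        by_cases hz : h₂ = 0
        · subst hz
          rw [if_pos rfl, ← A.act_mul, A.act_ins, A.act_one]
          have h1 : h + h₀ ∈ K (h₁ + 0) ((0 : H₂) + 0) := hKsum h₁ 0 0 0 h hmem h₀ hh₀
          simp only [add_zero] at h1
          have := hKact h₁ 0 p (h + h₀) h1 (w 0) (wmem 0)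
          rwa [hp] at this
        · rw [if_neg hz]
          have := hKact h₁ h₂ p h hmem (w h₂) (wmem h₂)
          rwa [hp] at this
      · have hh : h = 0 := congrArg Prod.fst h0
        have hh2 : h₂ = 0 := congrArg Prod.snd h0
        subst hh; subst hh2
        rw [show φ ((0:H),(0:H₂)) = 0 from φ_zero]
        rw [if_pos rfl, ← A.act_mul, A.act_ins, A.act_one, zero_add]
        have := hKact 0 0 p h₀ hh₀ (w 0) (wmem 0)
        rwa [hp] at this
    refine ⟨Or.inl ⟨A₁.act (φ (h, h₂)) v, key⟩, ?_⟩
    show φ _ = A₁.act (φ (h, h₂)) v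
    exact φ_spec _ _ key
end

section
/- Derived Category Theorem, part (b). Let F = (G,W), (H₁,V₁), (H₂,V₂) and (H,V) be forest algebras, and let α : F → (H₁,V₁) and β : F → (H₂,V₂) be forest algebra homomorphisms that are surjective in both components. Suppose there is a forest algebra homomorphism δ : F → (H,V)∘(H₂,V₂) such that π∘δ = β, where π is the projection of the wreath product onto its right-hand coordinates, and such that α factors through δ: for all s,s' ∈ G, δ(s) = δ(s') implies α(s) = α(s'), and for all p,p' ∈ W, δ(p) = δ(p') implies α(p) = α(p'). Then the derived forest category of (α,β) divides (H,V): there exist a family of subsets K(h₁,h₂) ⊆ H, one for each (h₁,h₂) ∈ H₁ × H₂ with h₁ = α(s), h₂ = β(s) for some s ∈ G, and a family of subsets K'(h₂,p) ⊆ V for (h₂,p) ∈ H₂ × W, satisfying: every K(h₁,h₂) and every K'(h₂,p) is nonempty; if h₂·β(p) = h₂·β(q) and (h₂, p, h₂·β(p)) ∼ (h₂, q, h₂·β(q)) then K'(h₂,p) = K'(h₂,q); K'(h₂,p)·K'(h₂·β(p), q) ⊆ K'(h₂, p·q); K(h₁,h₂)·K'(h₂,p) ⊆ K(h₁·α(p),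 h₂·β(p)); K(h₁,h₂) + K(h₁',h₂') ⊆ K(h₁+h₁', h₂+h₂'); for every s ∈ G, v ∈ K'(h₂,p) and h ∈ K(α(s),β(s)) imply ins(v,h) ∈ K'(h₂, ins(p,s)); if K(h₁,h₂) ∩ K(h₁',h₂) ≠ ∅ then h₁ = h₁'; and if h₂·β(p) = h₂·β(q) and K'(h₂,p) ∩ K'(h₂,q) ≠ ∅ then (h₂, p, h₂·β(p)) ∼ (h₂, q, h₂·β(q)). -/
/-- Derived Category Theorem, part (b): if `α` factors through a homomorphism `δ`
into the wreath product `(H,V)∘(H₂,V₂)` whose right-hand projection is `β`, then the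
derived forest category of `(α,β)` divides `(H,V)`, witnessed by covering families
`K` (for half-arrows) and `K'` (for arrows) with the listed properties.
The wreath product has horizontal part `H × H₂` with componentwise addition, vertical
part `(H₂ → V) × V₂` with multiplication
`(f₁,v₁)·(f₂,v₂) = (h ↦ f₁(h)·f₂(h·v₁), v₁·v₂)`, identity `(h ↦ 1, 1)`, and action
`(g,h₂)·(f,v) = (g·f(h₂), h₂·v)`; here `δ` is given by its pair of components
`δH : G → H × H₂` and `δV : W → (H₂ → V) × V₂`. -/
theorem derived_category_theorem_b
    {G W H₁ V₁ H₂ V₂ H V : Type*} [AddCommMonoid G] [Monoid W]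
    [AddCommMonoid H₁] [Monoid V₁] [AddCommMonoid H₂] [Monoid V₂]
    [AddCommMonoid H] [Monoid V]
    (F : ForestAlgebra G W) (A₁ : ForestAlgebra H₁ V₁) (A₂ : ForestAlgebra H₂ V₂)
    (A : ForestAlgebra H V)
    (α : ForestHom F A₁) (β : ForestHom F A₂)
    (hαH : Function.Surjective α.toH) (hαV : Function.Surjective α.toV)
    (hβH : Function.Surjective β.toH) (hβV : Function.Surjective β.toV)
    (δH : G → H × H₂) (δV : W → (H₂ → V) × V₂)
    -- δ is a forest algebra homomorphism into the wreath product (H,V)∘(H₂,V₂)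
    (hδzero : δH 0 = 0)
    (hδadd : ∀ s s' : G, δH (s + s') = δH s + δH s')
    (hδone : δV 1 = (fun _ => 1, 1))
    (hδmul : ∀ p q : W, δV (p * q) =
      (fun h => (δV p).1 h * (δV q).1 (A₂.act h (δV p).2), (δV p).2 * (δV q).2))
    (hδact : ∀ (s : G) (p : W), δH (F.act s p) =
      (A.act (δH s).1 ((δV p).1 (δH s).2), A₂.act (δH s).2 (δV p).2))
    -- π ∘ δ = β, where π is the projection onto the right-hand coordinates
    (hπH : ∀ s : G, (δH s).2 = β.toH s)
    (hπV : ∀ p : W, (δV p).2 = β.toV p)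
    -- α factors through δ
    (hfacH : ∀ s s' : G, δH s = δH s' → α.toH s = α.toH s')
    (hfacV : ∀ p p' : W, δV p = δV p' → α.toV p = α.toV p') :
    -- conclusion: the derived forest category of (α,β) divides (H,V)
    ∃ (K : H₁ → H₂ → Set H) (K' : H₂ → W → Set V),
      (∀ s : G, (K (α.toH s) (β.toH s)).Nonempty) ∧
      (∀ (h₂ : H₂) (p : W), (K' h₂ p).Nonempty) ∧
      (∀ (h₂ : H₂) (p q : W),
        A₂.act h₂ (β.toV p) = A₂.act h₂ (β.toV q) → DerSim α β h₂ p q →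
        K' h₂ p = K' h₂ q) ∧
      (∀ (h₂ : H₂) (p q : W), ∀ v ∈ K' h₂ p, ∀ w ∈ K' (A₂.act h₂ (β.toV p)) q,
        v * w ∈ K' h₂ (p * q)) ∧
      (∀ (h₁ : H₁) (h₂ : H₂) (p : W), ∀ h ∈ K h₁ h₂, ∀ v ∈ K' h₂ p,
        A.act h v ∈ K (A₁.act h₁ (α.toV p)) (A₂.act h₂ (β.toV p))) ∧
      (∀ (h₁ h₁' : H₁) (h₂ h₂' : H₂), ∀ h ∈ K h₁ h₂, ∀ h' ∈ K h₁' h₂',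
        h + h' ∈ K (h₁ + h₁') (h₂ + h₂')) ∧
      (∀ (s : G) (h₂ : H₂) (p : W), ∀ v ∈ K' h₂ p, ∀ h ∈ K (α.toH s) (β.toH s),
        A.ins v h ∈ K' h₂ (F.ins p s)) ∧
      (∀ (h₁ h₁' : H₁) (h₂ : H₂), (K h₁ h₂ ∩ K h₁' h₂).Nonempty → h₁ = h₁') ∧
      (∀ (h₂ : H₂) (p q : W),
        A₂.act h₂ (β.toV p) = A₂.act h₂ (β.toV q) →
        (K' h₂ p ∩ K' h₂ q).Nonempty → DerSim α β h₂ p q) := by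
  classical
  refine ⟨fun h₁ h₂ => {g | ∃ s, α.toH s = h₁ ∧ β.toH s = h₂ ∧ (δH s).1 = g},
    fun h₂ p => {v | ∃ q, A₂.act h₂ (β.toV q) = A₂.act h₂ (β.toV p) ∧
      DerSim α β h₂ p q ∧
      ∀ s, β.toH s = h₂ → A.act (δH s).1 v = A.act (δH s).1 ((δV q).1 h₂)},
    ?_, ?_, ?_, ?_, ?_, ?_, ?_, ?_, ?_⟩
  · -- K nonempty
    intro s
    exact ⟨(δH s).1, s, rfl, rfl, rfl⟩
  · -- K' nonempty
    intro h₂ p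
    exact ⟨(δV p).1 h₂, p, rfl, fun s _ => rfl, fun s _ => rfl⟩
  · -- K' constant on ∼-classes
    intro h₂ p q hact hsim
    ext v
    constructor
    · rintro ⟨p', h1, h2, h3⟩
      exact ⟨p', h1.trans hact, fun s hs => ((hsim s hs).symm).trans (h2 s hs), h3⟩
    · rintro ⟨q', h1, h2, h3⟩
      exact ⟨q', h1.trans hact.symm, fun s hs => (hsim s hs).trans (h2 s hs), h3⟩
  · -- multiplicativity of K'
    rintro h₂ p q v ⟨p', hp1, hp2, hp3⟩ w ⟨q', hq1, hq2, hq3⟩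
    refine ⟨p' * q', ?_, ?_, ?_⟩
    · rw [β.toV.map_mul, β.toV.map_mul, ← A₂.act_mul, ← A₂.act_mul, hp1, hq1]
    · intro s hs
      have hβsp : β.toH (F.act s p) = A₂.act h₂ (β.toV p) := by
        rw [β.map_act, hs]
      have hβsp' : β.toH (F.act s p') = A₂.act h₂ (β.toV p) := by
        rw [β.map_act, hs, hp1]
      calc α.toH (F.act s (p * q))
          = α.toH (F.act (F.act s p) q) := by rw [F.act_mul]
        _ = α.toH (F.act (F.act s p) q') := hq2 _ hβsp
        _ = A₁.act (α.toH (F.act s p)) (α.toV q') := α.map_act _ _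
        _ = A₁.act (α.toH (F.act s p')) (α.toV q') := by rw [hp2 s hs]
        _ = α.toH (F.act (F.act s p') q') := (α.map_act _ _).symm
        _ = α.toH (F.act s (p' * q')) := by rw [F.act_mul]
    · intro s hs
      have h2s : (δH s).2 = h₂ := (hπH s).trans hs
      have ht : δH (F.act s p') =
          (A.act (δH s).1 ((δV p').1 h₂), A₂.act h₂ (β.toV p)) := by
        rw [hδact, h2s, hπV, hp1]
      have hβt : β.toH (F.act s p') = A₂.act h₂ (β.toV p) := by
        rw [← hπH, ht]
      have key := hq3 _ hβt
      rw [ht] at key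
      have hmul : (δV (p' * q')).1 h₂ =
          (δV p').1 h₂ * (δV q').1 (A₂.act h₂ (β.toV p)) := by
        rw [hδmul]
        simp only []
        rw [hπV, hp1]
      rw [hmul, ← A.act_mul, hp3 s hs, ← A.act_mul, key]
  · -- action compatibility
    rintro h₁ h₂ p h ⟨s₀, hs1, hs2, hs3⟩ v ⟨q, hq1, hq2, hq3⟩
    refine ⟨F.act s₀ q, ?_, ?_, ?_⟩
    · rw [← hq2 s₀ hs2, α.map_act, hs1]
    · rw [β.map_act, hs2, hq1]
    · have h2s : (δH s₀).2 = h₂ := (hπH s₀).trans hs2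
      rw [hδact, h2s]
      show A.act (δH s₀).1 ((δV q).1 h₂) = A.act h v
      rw [← hq3 s₀ hs2, hs3]
  · -- additivity of K
    rintro h₁ h₁' h₂ h₂' h ⟨s, hs1, hs2, hs3⟩ h' ⟨s', hs1', hs2', hs3'⟩
    refine ⟨s + s', ?_, ?_, ?_⟩
    · rw [map_add, hs1, hs1']
    · rw [map_add, hs2, hs2']
    · rw [hδadd]
      show (δH s).1 + (δH s').1 = h + h'
      rw [hs3, hs3']
  · -- insertion
    rintro s h₂ p v ⟨q, hq1, hq2, hq3⟩ h ⟨t, ht1, ht2, ht3⟩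
    obtain ⟨u, hu⟩ := hβH h₂
    refine ⟨F.ins q t, ?_, ?_, ?_⟩
    · have e1 : A₂.act h₂ (β.toV (F.ins q t)) = A₂.act h₂ (β.toV q) + β.toH t := by
        rw [← hu, ← β.map_act, F.act_ins, map_add, β.map_act]
      have e2 : A₂.act h₂ (β.toV (F.ins p s)) = A₂.act h₂ (β.toV p) + β.toH s := by
        rw [← hu, ← β.map_act, F.act_ins, map_add, β.map_act]
      rw [e1, e2, hq1, ht2]
    · intro u' hu'
      rw [F.act_ins, F.act_ins, map_add, map_add, hq2 u' hu', ht1]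
    · intro u' hu'
      have h2u : (δH u').2 = h₂ := (hπH u').trans hu'
      have e1 : δH (F.act u' (F.ins q t)) =
          (A.act (δH u').1 ((δV (F.ins q t)).1 h₂),
            A₂.act h₂ (δV (F.ins q t)).2) := by rw [hδact, h2u]
      have e2 : δH (F.act u' (F.ins q t)) = δH (F.act u' q) + δH t := by
        rw [F.act_ins, hδadd]
      have e3 : δH (F.act u' q) =
          (A.act (δH u').1 ((δV q).1 h₂), A₂.act h₂ (δV q).2) := by
        rw [hδact, h2u]
      have efst : A.act (δH u').1 ((δV (F.ins q t)).1 h₂) =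
          A.act (δH u').1 ((δV q).1 h₂) + (δH t).1 := by
        have := congrArg Prod.fst (e1.symm.trans e2)
        rw [e3] at this
        exact this
      rw [A.act_ins, efst, hq3 u' hu', ht3]
  · -- K separation
    rintro h₁ h₁' h₂ ⟨g, ⟨s, hs1, hs2, hs3⟩, ⟨s', hs1', hs2', hs3'⟩⟩
    have hδ : δH s = δH s' := by
      have h2 : (δH s).2 = (δH s').2 := by rw [hπH, hπH, hs2, hs2']
      have h1 : (δH s).1 = (δH s').1 := by rw [hs3, hs3']
      exact Prod.ext h1 h2
    rw [← hs1, ← hs1', hfacH s s' hδ]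
  · -- K' separation
    rintro h₂ p q hact ⟨v, ⟨p', hp1, hp2, hp3⟩, ⟨q', hq1, hq2, hq3⟩⟩
    intro s hs
    have h2s : (δH s).2 = h₂ := (hπH s).trans hs
    have hδ : δH (F.act s p') = δH (F.act s q') := by
      rw [hδact, hδact, h2s, hπV, hπV, hp1, hq1, ← hact]
      congr 1
      rw [← hp3 s hs, hq3 s hs]
    rw [hp2 s hs, hfacH _ _ hδ, ← hq2 s hs]
end

section
/- Let (H₁,V₁) and (H₂,V₂) be forest algebras. If (H₁,V₁) tm-divides (H₂,V₂), then (H₁,V₁) divides (H₂,V₂). -/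
/-- `(H₁,V₁)` divides `(H₂,V₂)`: there are a sub-forest-algebra of `(H₂,V₂)` and a
surjective pair of monoid homomorphisms from it onto `(H₁,V₁)`, compatible with the
actions. -/
def FADivides {H₁ V₁ H₂ V₂ : Type*}
    [AddCommMonoid H₁] [Monoid V₁] [AddCommMonoid H₂] [Monoid V₂]
    (A₁ : ForestAlgebra H₁ V₁) (A₂ : ForestAlgebra H₂ V₂) : Prop :=
  ∃ (H' : AddSubmonoid H₂) (V' : Submonoid V₂)
    (hcl : ∀ h ∈ H', ∀ v ∈ V', A₂.act h v ∈ H')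
    (φH : H' →+ H₁) (φV : V' →* V₁),
    Function.Surjective φH ∧ Function.Surjective φV ∧
    ∀ (h : H') (v : V'),
      φH ⟨A₂.act (h : H₂) (v : V₂), hcl h h.2 v v.2⟩ = A₁.act (φH h) (φV v)

/-- `(H₁,V₁)` tm-divides `(H₂,V₂)`: there are an additive submonoid `K` of `H₂` and a
surjective additive homomorphism `Ψ : K → H₁` such that every `v ∈ V₁` is covered by
some `v̂ ∈ V₂` acting compatibly on `K`. -/
def FATMDivides {H₁ V₁ H₂ V₂ : Type*}
    [AddCommMonoid H₁] [Monoid V₁] [AddCommMonoid H₂] [Monoid V₂]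
    (A₁ : ForestAlgebra H₁ V₁) (A₂ : ForestAlgebra H₂ V₂) : Prop :=
  ∃ (K : AddSubmonoid H₂) (Ψ : K →+ H₁),
    Function.Surjective Ψ ∧
    ∀ v : V₁, ∃ vh : V₂, ∀ k : K,
      ∃ hk : A₂.act (k : H₂) vh ∈ K,
        Ψ ⟨A₂.act (k : H₂) vh, hk⟩ = A₁.act (Ψ k) v

/-- tm-division implies division for forest algebras. -/
theorem tmDivides_implies_divides {H₁ V₁ H₂ V₂ : Type*}
    [AddCommMonoid H₁] [Monoid V₁] [AddCommMonoid H₂] [Monoid V₂]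
    (A₁ : ForestAlgebra H₁ V₁) (A₂ : ForestAlgebra H₂ V₂)
    (h : FATMDivides A₁ A₂) : FADivides A₁ A₂ := by
  classical
  obtain ⟨K, Ψ, hΨsurj, hcov⟩ := h
  -- covering predicate
  set Cov : V₂ → V₁ → Prop := fun w v =>
    ∀ k : K, ∃ hk : A₂.act (k : H₂) w ∈ K, Ψ ⟨A₂.act (k : H₂) w, hk⟩ = A₁.act (Ψ k) v
    with hCov
  have cov_unique : ∀ {w v v'}, Cov w v → Cov w v' → v = v' := by
    intro w v v' h1 h2
    apply A₁.faithful
    intro x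
    obtain ⟨k, rfl⟩ := hΨsurj x
    obtain ⟨hk1, e1⟩ := h1 k
    obtain ⟨hk2, e2⟩ := h2 k
    rw [← e1, ← e2]
  have cov_one : Cov 1 1 := by
    intro k
    refine ⟨by rw [A₂.act_one]; exact k.2, ?_⟩
    have : (⟨A₂.act (k : H₂) 1, by rw [A₂.act_one]; exact k.2⟩ : K) = k := by
      ext; exact A₂.act_one _
    rw [this, A₁.act_one]
  have cov_mul : ∀ {w v w' v'}, Cov w v → Cov w' v' → Cov (w * w') (v * v') := by
    intro w v w' v' h1 h2 k
    obtain ⟨hk1, e1⟩ := h1 k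
    obtain ⟨hk2, e2⟩ := h2 ⟨A₂.act (k : H₂) w, hk1⟩
    refine ⟨by rw [← A₂.act_mul]; exact hk2, ?_⟩
    have : (⟨A₂.act (k : H₂) (w * w'), by rw [← A₂.act_mul]; exact hk2⟩ : K)
        = ⟨A₂.act (A₂.act (k : H₂) w) w', hk2⟩ := by
      ext; exact (A₂.act_mul _ _ _).symm
    rw [this, e2, e1, A₁.act_mul]
  let V' : Submonoid V₂ :=
    { carrier := setOf (fun w => ∃ v, Cov w v)
      mul_mem' := fun ⟨v, hv⟩ ⟨v', hv'⟩ => ⟨v * v', cov_mul hv hv'⟩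
      one_mem' := ⟨1, cov_one⟩ }
  have hclV : ∀ x ∈ K, ∀ w ∈ V', A₂.act x w ∈ K := by
    rintro x hx w ⟨v, hv⟩
    exact (hv ⟨x, hx⟩).1
  have memV' : ∀ w : V', ∃ v, Cov (w : V₂) v := fun w => w.2
  let f : V' → V₁ := fun w => Classical.choose (memV' w)
  have hf : ∀ w : V', Cov (w : V₂) (f w) := fun w => Classical.choose_spec (memV' w)
  have f_one : f 1 = 1 := cov_unique (hf 1) cov_one
  have f_mul : ∀ w w', f (w * w') = f w * f w' := fun w w' =>
    cov_unique (hf (w * w')) (cov_mul (hf w) (hf w'))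
  refine ⟨K, V', hclV, Ψ, ⟨⟨f, f_one⟩, f_mul⟩, hΨsurj, ?_, ?_⟩
  · intro v
    obtain ⟨vh, hvh⟩ := hcov v
    have hmem : vh ∈ V' := ⟨v, hvh⟩
    exact ⟨⟨vh, hmem⟩, cov_unique (hf ⟨vh, hmem⟩) hvh⟩
  · intro k w
    obtain ⟨hk, e⟩ := hf w k
    exact e
end

section
/- Let (H₂,V₂) and (H₁,V₁) be forest algebras, with insertion operations ins₂ and ins₁ respectively. Define, for (f,v) in the vertical part of the wreath product (H₂,V₂)∘(H₁,V₁) and (k₂,k₁) ∈ H₂ × H₁, the element Ins((f,v),(k₂,k₁)) = (h ↦ ins₂(f(h), k₂), ins₁(v, k₁)). Then for all (g₂,g₁) ∈ H₂ × H₁: (g₂,g₁)·Ins((f,v),(k₂,k₁)) = (g₂,g₁)·(f,v) + (k₂,k₁), where + is componentwise addition. Hence the wreath product admits an insertion operation and is itself a forest algebra. -/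
/-- The wreath product `(H₂,V₂)∘(H₁,V₁)` admits an insertion operation:
`(g₂,g₁)·Ins((f,v),(k₂,k₁)) = (g₂,g₁)·(f,v) + (k₂,k₁)`. -/
theorem wreath_insertion
    {H₂ V₂ H₁ V₁ : Type*} [AddCommMonoid H₂] [Monoid V₂] [AddCommMonoid H₁] [Monoid V₁]
    (A₂ : ForestAlgebra H₂ V₂) (A₁ : ForestAlgebra H₁ V₁) :
    let wAct : (H₂ × H₁) → ((H₁ → V₂) × V₁) → H₂ × H₁ :=
      fun g u => (A₂.act g.1 (u.1 g.2), A₁.act g.2 u.2)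
    let wIns : ((H₁ → V₂) × V₁) → (H₂ × H₁) → ((H₁ → V₂) × V₁) :=
      fun u k => (fun h => A₂.ins (u.1 h) k.1, A₁.ins u.2 k.2)
    ∀ (g : H₂ × H₁) (u : (H₁ → V₂) × V₁) (k : H₂ × H₁),
      wAct g (wIns u k) = wAct g u + k := by
  intro wAct wIns g u k
  simp [wAct, wIns, Prod.ext_iff, A₂.act_ins, A₁.act_ins]
end

section
/- Vertical idempotence from loop removal. Let (H,V) be a forest algebra satisfying horizontal idempotence, i.e. h + h = h for all h ∈ H, and the loop removal identity: ((r·s)·t₁) + ((r·s)·t₂) = (r·t₁) + ((r·s)·t₂) for all r ∈ H and s, t₁, t₂ ∈ V. Then s·s = s for all s ∈ V (vertical idempotence). -/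
/-- Vertical idempotence from loop removal: in a forest algebra satisfying
horizontal idempotence and the loop removal identity, every vertical element
is idempotent. -/
theorem vertical_idempotence
    {H V : Type*} [AddCommMonoid H] [Monoid V] (A : ForestAlgebra H V)
    (hidem : ∀ h : H, h + h = h)
    (hloop : ∀ (r : H) (s t₁ t₂ : V),
      A.act (A.act r s) t₁ + A.act (A.act r s) t₂ =
        A.act r t₁ + A.act (A.act r s) t₂) :
    ∀ s : V, s * s = s := by
  intro s
  apply A.faithful
  intro h
  have h1 := hloop h s s 1
  rw [A.act_one, A.act_mul, hidem] at h1
  -- h1 : act h (s*s) + act h s = act h s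
  have h2 := hloop h s s s
  rw [A.act_mul, hidem] at h2
  -- h2 : act h (s*s) = act h s + act h (s*s)
  rw [h2, add_comm, h1]
end

section
/- Horizontal swap from horizontal absorption. Let (H,V) be a forest algebra satisfying the horizontal absorption identity: ((r + s)·t) + (r·u) = (s·t) + (r·u) for all r, s ∈ H and t, u ∈ V. Then (r·t) + (s·u) = (s·t) + (r·u) for all r, s ∈ H and t, u ∈ V (horizontal swap). -/
/-- Horizontal swap from horizontal absorption. -/
theorem horizontal_swap
    {H V : Type*} [AddCommMonoid H] [Monoid V] (A : ForestAlgebra H V)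
    (habs : ∀ (r s : H) (t u : V),
      A.act (r + s) t + A.act r u = A.act s t + A.act r u) :
    ∀ (r s : H) (t u : V),
      A.act r t + A.act s u = A.act s t + A.act r u := by
  intro r s t u
  -- the "identity" vertical element
  set e : V := A.ins 1 0 with he
  have acte : ∀ h : H, A.act h e = h := by
    intro h
    rw [he, A.act_ins, A.act_one, add_zero]
  -- F1 : r + s + r·u = s + r·u
  have F1 : ∀ (r s : H) (u : V), r + s + A.act r u = s + A.act r u := by
    intro r s u
    have := habs r s e u
    rwa [acte, acte] at this
  -- F2 : (r+s)·t + r = s·t + r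
  have F2 : ∀ (r s : H) (t : V), A.act (r + s) t + r = A.act s t + r := by
    intro r s t
    have := habs r s t e
    rwa [acte] at this
  have key : ∀ (r s : H) (t u : V),
      A.act r t + A.act s u = A.act (r + s) t + A.act (r + s) u := by
    intro r s t u
    have h1 := habs r s u t
    have h2 := F1 (r + s) (A.act r t) u
    have h3 := F2 s r t
    have h4 := F1 (r + s) (A.act (r + s) t) u
    calc A.act r t + A.act s u
        = A.act s u + A.act r t := by abel
      _ = A.act (r + s) u + A.act r t := h1.symm
      _ = (r + s) + A.act r t + A.act (r + s) u := by rw [h2]; abel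
      _ = (A.act r t + s) + (r + A.act (r + s) u) := by abel
      _ = (A.act (s + r) t + s) + (r + A.act (r + s) u) := by rw [h3]
      _ = (r + s) + A.act (r + s) t + A.act (r + s) u := by rw [add_comm s r]; abel
      _ = A.act (r + s) t + A.act (r + s) u := h4
  calc A.act r t + A.act s u = A.act (r + s) t + A.act (r + s) u := key r s t u
    _ = A.act (s + r) t + A.act (s + r) u := by rw [add_comm r s]
    _ = A.act s t + A.act r u := (key s r t u).symm
end

section
/- Let (H,V) be a forest algebra satisfying the horizontal absorption identity: ((r + s)·t) + (r·u) = (s·t) + (r·u) for all r, s ∈ H and t, u ∈ V. Then ((r + t)·s) + (r·u) = (((r·u) + t)·s) + (r·u) for all r, t ∈ H and s, u ∈ V. -/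
/-- Consequence (iii) of horizontal absorption. -/
theorem absorption_consequence
    {H V : Type*} [AddCommMonoid H] [Monoid V] (A : ForestAlgebra H V)
    (habs : ∀ (r s : H) (t u : V),
      A.act (r + s) t + A.act r u = A.act s t + A.act r u) :
    ∀ (r t : H) (s u : V),
      A.act (r + t) s + A.act r u = A.act (A.act r u + t) s + A.act r u := by
  intro r t s u
  have h1 := habs r t s u
  have h2 := habs (A.act r u) t s 1
  rw [A.act_one] at h2
  rw [h1, h2]
end

section
/- Composition in the derived forest category is well defined. Let F = (G,W), (H₁,V₁), (H₂,V₂) be forest algebras and α : F → (H₁,V₁), β : F → (H₂,V₂) forest algebra homomorphisms. Let h₁, h₂, h₃ ∈ H₂ and p, p', q, q' ∈ W with h₁·β(p) = h₂ = h₁·β(p') and h₂·β(q) = h₃ = h₂·β(q'). If (h₁, p, h₂) ∼ (h₁, p', h₂) and (h₂, q, h₃) ∼ (h₂, q', h₃), then (h₁, p·q, h₃) ∼ (h₁, p'·q', h₃); moreover h₁·β(p·q) = h₃. -/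
/-- Composition in the derived forest category is well defined. -/
theorem derived_composition_well_defined
    {G W H₁ V₁ H₂ V₂ : Type*} [AddCommMonoid G] [Monoid W]
    [AddCommMonoid H₁] [Monoid V₁] [AddCommMonoid H₂] [Monoid V₂]
    (F : ForestAlgebra G W) (A₁ : ForestAlgebra H₁ V₁) (A₂ : ForestAlgebra H₂ V₂)
    (α : ForestHom F A₁) (β : ForestHom F A₂)
    (h₁ h₂ h₃ : H₂) (p p' q q' : W)
    (hp : A₂.act h₁ (β.toV p) = h₂) (hp' : A₂.act h₁ (β.toV p') = h₂)
    (hq : A₂.act h₂ (β.toV q) = h₃) (hq' : A₂.act h₂ (β.toV q') = h₃)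
    (hpp' : DerSim α β h₁ p p') (hqq' : DerSim α β h₂ q q') :
    DerSim α β h₁ (p * q) (p' * q') ∧ A₂.act h₁ (β.toV (p * q)) = h₃ := by
  constructor
  · intro s hs
    have hβsp : β.toH (F.act s p) = h₂ := by
      rw [β.map_act, hs, hp]
    have h1 : α.toH (F.act s (p * q)) = α.toH (F.act (F.act s p) q') := by
      rw [← F.act_mul]
      exact hqq' (F.act s p) hβsp
    have h2 : α.toH (F.act (F.act s p) q') = α.toH (F.act (F.act s p') q') := by
      rw [α.map_act (F.act s p), α.map_act (F.act s p'), hpp' s hs]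
    rw [h1, h2, F.act_mul]
  · rw [β.toV.map_mul, ← A₂.act_mul, hp, hq]
end
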